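/- Let D be a preference domain on a finite set A of alternatives that is minimally rich and connected (under the adjacency relation of single swaps of consecutive alternatives). Then the induced graph G(D) on vertex set A — with an edge between a and b iff there exist adjacent preferences P, P' in D with a top-ranked in P, b top-ranked in P', and a second-ranked in P', b second-ranked in P — is connected. -/
import Mathlib


open Relation

/-- A preference is a ranking: a bijection from alternatives to ranks (0 = best). -/
abbrev Pref (A : Type*) [Fintype A] := A ≃ Fin (Fintype.card A)

namespace Pref

variable {A : Type*} [Fintype A]

/-- The rank (as a natural number, 0 = best) of alternative `a` in preference `P`. -/
def rk (P : Pref A) (a : A) : ℕ := (P a : ℕ)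

/-- The top-ranked alternative of `P`. -/
noncomputable def top [Nonempty A] (P : Pref A) : A := P.symm ⟨0, Fintype.card_pos⟩

/-- `a` is strictly preferred to `b` under `P`. -/
def SPrefers (P : Pref A) (a b : A) : Prop := rk P a < rk P b

/-- Two preferences are adjacent if they differ by one swap of consecutively
ranked alternatives. -/
def Adjacent (P P' : Pref A) : Prop :=
  ∃ a b : A, rk P a = rk P b + 1 ∧ rk P' a = rk P b ∧ rk P' b = rk P a ∧
    ∀ c : A, c ≠ a → c ≠ b → rk P c = rk P' c

end Pref

open Pref

variable {A : Type*} [Fintype A] [Nonempty A]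

/-- One step between members of the domain `D` along adjacent preferences. -/
def StepRel (D : Set (Pref A)) (P Q : Pref A) : Prop := P ∈ D ∧ Q ∈ D ∧ Adjacent P Q

/-- The domain `D` is connected: any two members are joined by a path of
adjacent preferences inside `D`. -/
def DConnected (D : Set (Pref A)) : Prop :=
  ∀ P ∈ D, ∀ Q ∈ D, ReflTransGen (StepRel D) P Q

/-- One step inside `D` along adjacent preferences keeping the same top. -/
def TStepRel (D : Set (Pref A)) (P Q : Pref A) : Prop :=
  StepRel D P Q ∧ Pref.top P = Pref.top Q

/-- The top-connected closure of `P` in `D`. -/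
def TCC (D : Set (Pref A)) (P : Pref A) : Set (Pref A) :=
  {Q | ReflTransGen (TStepRel D) P Q}

/-- Neighbours of a subset `S` inside the domain `D`. -/
def Nbr (D S : Set (Pref A)) : Set (Pref A) :=
  {Q | Q ∈ D ∧ Q ∉ S ∧ ∃ P ∈ S, Adjacent P Q}

/-- `D` is connected with two distinct neighbours. -/
def CDN (D : Set (Pref A)) : Prop :=
  DConnected D ∧
    ∀ P ∈ D, ∃ Q ∈ Nbr D (TCC D P), ∃ R ∈ Nbr D (TCC D P), Pref.top Q ≠ Pref.top R

/-- Every alternative is top-ranked in some preference of `D`. -/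
def MinimallyRich (D : Set (Pref A)) : Prop := ∀ a : A, ∃ P ∈ D, Pref.top P = a

/-- The edge relation of the induced graph `G(D)` on alternatives. -/
def EdgeD (D : Set (Pref A)) (a b : A) : Prop :=
  ∃ P ∈ D, ∃ P' ∈ D, Adjacent P P' ∧
    Pref.top P = a ∧ Pref.top P' = b ∧ rk P b = 1 ∧ rk P' a = 1

/-- `v 0, v 1, …, v (k-1)` is a path in the induced graph `G(D)`. -/
def IsPathD (D : Set (Pref A)) (k : ℕ) (v : ℕ → A) : Prop :=
  (∀ i j, i < k → j < k → v i = v j → i = j) ∧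
    ∀ i, i + 1 < k → EdgeD D (v i) (v (i + 1))

/-- Connected component of `P` in `D`. -/
def Component (D : Set (Pref A)) (P : Pref A) : Set (Pref A) :=
  {Q | Q ∈ D ∧ ReflTransGen (StepRel D) P Q}

section SCF

variable {n : ℕ} (D : Set (Pref A))

/-- Unanimity. -/
def Unanimous (f : (Fin n → D) → A) : Prop :=
  ∀ (P : Fin n → D) (a : A), (∀ i, Pref.top (P i : Pref A) = a) → f P = a

/-- Local strategy-proofness. -/
def LocallySP (f : (Fin n → D) → A) : Prop :=
  ∀ (P : Fin n → D) (i : Fin n) (Q : D), Adjacent (P i : Pref A) (Q : Pref A) →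
    ¬ SPrefers (P i : Pref A) (f (Function.update P i Q)) (f P)

/-- (Global) strategy-proofness. -/
def StrategyProof (f : (Fin n → D) → A) : Prop :=
  ∀ (P : Fin n → D) (i : Fin n) (Q : D),
    ¬ SPrefers (P i : Pref A) (f (Function.update P i Q)) (f P)

/-- Tops-onlyness. -/
def TopsOnly (f : (Fin n → D) → A) : Prop :=
  ∀ P P' : Fin n → D,
    (∀ i, Pref.top (P i : Pref A) = Pref.top (P' i : Pref A)) → f P = f P'

/-- Dictatorship. -/
def Dictatorial (f : (Fin n → D) → A) : Prop :=
  ∃ i : Fin n, ∀ P : Fin n → D, f P = Pref.top (P i : Pref A)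

/-- Voter `i` is decisive over `a`. -/
def Decisive (f : (Fin n → D) → A) (i : Fin n) (a : A) : Prop :=
  ∀ P : Fin n → D, Pref.top (P i : Pref A) = a → f P = a

end SCF

/-- Lemma 1(a): the graph induced by a minimally rich connected domain is
connected. -/
lemma rk_top_aux {A : Type*} [Fintype A] [Nonempty A] (P : Pref A) (c : A)
    (h : rk P c = 0) : Pref.top P = c := by
  have : P c = ⟨0, Fintype.card_pos⟩ := Fin.ext h
  simp [Pref.top, ← this]

lemma step_edge {A : Type*} [Fintype A] [Nonempty A] {D : Set (Pref A)} {P Q : Pref A}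
    (h : StepRel D P Q) : Relation.ReflTransGen (EdgeD D) (Pref.top P) (Pref.top Q) := by
  obtain ⟨hP, hQ, a, b, h1, h2, h3, h4⟩ := h
  rcases Nat.eq_zero_or_pos (rk P b) with hb | hb
  · -- b is top of P, a becomes top of Q; edge
    have htP : Pref.top P = b := rk_top_aux P b hb
    have htQ : Pref.top Q = a := rk_top_aux Q a (h2.trans hb)
    refine Relation.ReflTransGen.single ?_
    refine ⟨P, hP, Q, hQ, ⟨a, b, h1, h2, h3, h4⟩, rfl, rfl, ?_, ?_⟩
    · rw [htQ, h1, hb]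
    · rw [htP, h3, h1, hb]
  · -- swap is below the top; tops are equal
    have htop : Pref.top P = Pref.top Q := by
      set c := Pref.top P with hc
      have hc0 : rk P c = 0 := by simp [Pref.rk, hc, Pref.top]
      have hca : c ≠ a := by
        intro h; rw [h] at hc0; omega
      have hcb : c ≠ b := by
        intro h; rw [h] at hc0; omega
      exact (rk_top_aux Q c ((h4 c hca hcb) ▸ hc0)).symm
    rw [htop]

theorem stmt3 {A : Type*} [Fintype A] [Nonempty A] (hA : 3 ≤ Fintype.card A)
    (D : Set (Pref A)) (hmr : MinimallyRich D) (hconn : DConnected D) :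
    ∀ a b : A, Relation.ReflTransGen (EdgeD D) a b := by
  intro a b
  obtain ⟨P, hP, hPa⟩ := hmr a
  obtain ⟨Q, hQ, hQb⟩ := hmr b
  have hpath := hconn P hP Q hQ
  rw [← hPa, ← hQb]
  clear hPa hQb hP hQ
  induction hpath with
  | refl => exact Relation.ReflTransGen.refl
  | tail _ step ih => exact ih.trans (step_edge step)
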